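/- arXiv:1312.7658 — 2 statements merged into one kernel-verified Lean document; each statement's English description precedes it below -/
import Mathlib

section
/- If a sequence of vectors λ_n in ℝ^ℓ satisfies λ_0 = 0, n²‖λ_n‖² ≤ (n−1)²‖λ_{n−1}‖² + 2(n−1) λ_{n−1}·(r*_n − r_n) + ρ², and λ_{n−1}·(r*_n − r_n) ≤ 0 for all n ≥ 1, then ‖λ_n‖ ≤ ρ/√n for all n ≥ 1. -/
/-! With `x n = n² ‖λ n‖²`, the recursion and the sign condition give `x (n + 1) ≤ x n + ρ²`,
so `x n ≤ n ρ²` by telescoping, which is the claim after dividing by `n²`. -/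

open scoped BigOperators

theorem le_nat_mul_of_succ_le_add {x : ℕ → ℝ} {c : ℝ} (h₀ : x 0 ≤ 0)
    (hstep : ∀ n, x (n + 1) ≤ x n + c) (n : ℕ) : x n ≤ n * c := by
  induction n with
  | zero => simpa using h₀
  | succ n ih =>
    push_cast
    linarith [hstep n]

theorem le_div_sqrt_of_sq_mul_sq_le {n t ρ : ℝ} (hn : 0 < n) (hρ : 0 ≤ ρ) (ht : 0 ≤ t)
    (h : n ^ 2 * t ^ 2 ≤ n * ρ ^ 2) : t ≤ ρ / √n := by
  have hsq : t ^ 2 ≤ (ρ / √n) ^ 2 := by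
    rw [div_pow, Real.sq_sqrt hn.le, le_div_iff₀ hn]
    nlinarith
  exact (sq_le_sq₀ ht (by positivity)).mp hsq

theorem stmt1_general {ℓ : ℕ} (ρ : ℝ) (r rs lam : ℕ → EuclideanSpace ℝ (Fin ℓ))
    (hρ : ∀ k, ‖rs k - r k‖ ≤ ρ)
    (hrec : ∀ n : ℕ, 1 ≤ n →
      (n : ℝ) ^ 2 * ‖lam n‖ ^ 2 ≤
        ((n : ℝ) - 1) ^ 2 * ‖lam (n - 1)‖ ^ 2
          + 2 * ((n : ℝ) - 1) * (inner ℝ (lam (n - 1)) (rs n - r n) : ℝ) + ρ ^ 2)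
    (hneg : ∀ n : ℕ, 1 ≤ n → (inner ℝ (lam (n - 1)) (rs n - r n) : ℝ) ≤ 0) :
    ∀ n : ℕ, 1 ≤ n → ‖lam n‖ ≤ ρ / Real.sqrt n := by
  have hρ₀ : 0 ≤ ρ := (norm_nonneg _).trans (hρ 0)
  have hstep (m : ℕ) :
      ((m + 1 : ℕ) : ℝ) ^ 2 * ‖lam (m + 1)‖ ^ 2 ≤ (m : ℝ) ^ 2 * ‖lam m‖ ^ 2 + ρ ^ 2 := by
    have hrec' := hrec (m + 1) m.succ_pos
    have hneg' := hneg (m + 1) m.succ_pos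
    simp only [Nat.add_sub_cancel, Nat.cast_succ, add_sub_cancel_right] at hrec' hneg' ⊢
    linarith [mul_nonpos_of_nonneg_of_nonpos (m.cast_nonneg : (0 : ℝ) ≤ m) hneg']
  intro n hn
  refine le_div_sqrt_of_sq_mul_sq_le (by exact_mod_cast hn) hρ₀ (norm_nonneg _) ?_
  exact le_nat_mul_of_succ_le_add (x := fun m : ℕ => (m : ℝ) ^ 2 * ‖lam m‖ ^ 2)
    (by simp) hstep n

theorem stmt1 {ℓ : ℕ} (ρ : ℝ) (r rs lam : ℕ → EuclideanSpace ℝ (Fin ℓ))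
    (hρ : ∀ k, ‖rs k - r k‖ ≤ ρ)
    (hlam0 : lam 0 = 0)
    (hrec : ∀ n : ℕ, 1 ≤ n →
      (n : ℝ) ^ 2 * ‖lam n‖ ^ 2 ≤
        ((n : ℝ) - 1) ^ 2 * ‖lam (n - 1)‖ ^ 2
          + 2 * ((n : ℝ) - 1) * (inner ℝ (lam (n - 1)) (rs n - r n) : ℝ) + ρ ^ 2)
    (hneg : ∀ n : ℕ, 1 ≤ n → (inner ℝ (lam (n - 1)) (rs n - r n) : ℝ) ≤ 0) :
    ∀ n : ℕ, 1 ≤ n → ‖lam n‖ ≤ ρ / Real.sqrt n :=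
  stmt1_general ρ r rs lam hρ hrec hneg
end

section
/- Let S ⊆ ℝ^ℓ be a closed convex set, and let (r_k), (r*_k) be sequences with r*_k ∈ S and ‖r*_k − r_k‖ ≤ ρ for all k, satisfying ((1/(n−1))Σ_{k<n}(r*_k − r_k)) · (r*_n − r_n) ≤ 0 for all n ≥ 2. Then the Euclidean distance of the average reward from S satisfies d((1/n)Σ_{k=1}^n r_k, S) ≤ ρ/√n for all n ≥ 1. -/
/-!
The steering condition says that each new deviation `r*ₙ - rₙ` makes an obtuse angle with the sum
of the previous ones, so by Pythagoras the squared norm of the sum of the first `n` deviations is at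
most `n ρ²`. The average of the `r*ₖ` lies in `S` by convexity, and its distance to the average
reward is that sum divided by `n`, hence at most `ρ / √n`.
-/

open scoped RealInnerProductSpace
open Finset Metric

variable {E : Type*} [NormedAddCommGroup E] [InnerProductSpace ℝ E]

theorem norm_sum_Icc_sq_le_sum_norm_sq_of_inner_nonpos {d : ℕ → E}
    (h : ∀ m, ⟪∑ k ∈ Icc 1 m, d k, d (m + 1)⟫ ≤ 0) (n : ℕ) :
    ‖∑ k ∈ Icc 1 n, d k‖ ^ 2 ≤ ∑ k ∈ Icc 1 n, ‖d k‖ ^ 2 := by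
  induction n with
  | zero => simp
  | succ m ih =>
    rw [sum_Icc_succ_top (by omega), sum_Icc_succ_top (by omega), norm_add_sq_real]
    linarith [h m]

theorem Convex.infDist_average_le {ι : Type*} {S : Set E} (hS : Convex ℝ S) {s : Finset ι}
    (hs : s.Nonempty) {r p : ι → E} (hp : ∀ i ∈ s, p i ∈ S) :
    infDist ((#s : ℝ)⁻¹ • ∑ i ∈ s, r i) S ≤ ‖∑ i ∈ s, (p i - r i)‖ / #s := by
  have hcard : (0 : ℝ) < #s := by exact_mod_cast hs.card_pos
  have hmem : (#s : ℝ)⁻¹ • ∑ i ∈ s, p i ∈ S := by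
    rw [smul_sum]
    exact hS.sum_mem (fun _ _ => by positivity) (by simp [hcard.ne']) hp
  calc infDist ((#s : ℝ)⁻¹ • ∑ i ∈ s, r i) S
      ≤ dist ((#s : ℝ)⁻¹ • ∑ i ∈ s, p i) ((#s : ℝ)⁻¹ • ∑ i ∈ s, r i) := by
        rw [dist_comm]; exact infDist_le_dist_of_mem hmem
    _ = ‖∑ i ∈ s, (p i - r i)‖ / #s := by
        rw [dist_eq_norm, ← smul_sub, ← sum_sub_distrib, norm_smul, norm_inv, RCLike.norm_natCast,
          inv_mul_eq_div]

theorem stmt2_general {ℓ : ℕ} (ρ : ℝ) (S : Set (EuclideanSpace ℝ (Fin ℓ)))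
    (hSconv : Convex ℝ S)
    (r rs : ℕ → EuclideanSpace ℝ (Fin ℓ))
    (hmem : ∀ k, rs k ∈ S)
    (hρ : ∀ k, ‖rs k - r k‖ ≤ ρ)
    (hsteer : ∀ n : ℕ, 2 ≤ n →
      (inner ℝ (((n : ℝ) - 1)⁻¹ • ∑ k ∈ Finset.Icc 1 (n - 1), (rs k - r k))
        (rs n - r n) : ℝ) ≤ 0) :
    ∀ n : ℕ, 1 ≤ n →
      Metric.infDist ((n : ℝ)⁻¹ • ∑ k ∈ Finset.Icc 1 n, r k) S ≤ ρ / Real.sqrt n := by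
  intro n hn
  have hρ0 : 0 ≤ ρ := (norm_nonneg _).trans (hρ 0)
  have hobtuse : ∀ m, ⟪∑ k ∈ Icc 1 m, (rs k - r k), rs (m + 1) - r (m + 1)⟫ ≤ 0 := by
    intro m
    rcases m.eq_zero_or_pos with rfl | hm
    · simp
    have h := hsteer (m + 1) (by omega)
    rw [Nat.add_sub_cancel, real_inner_smul_left, Nat.cast_add_one, add_sub_cancel_right] at h
    exact nonpos_of_mul_nonpos_right h (by positivity)
  have hsum : ‖∑ k ∈ Icc 1 n, (rs k - r k)‖ ≤ Real.sqrt n * ρ := by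
    rw [← Real.sqrt_sq hρ0, ← Real.sqrt_mul (Nat.cast_nonneg n)]
    refine Real.le_sqrt_of_sq_le ((norm_sum_Icc_sq_le_sum_norm_sq_of_inner_nonpos hobtuse n).trans ?_)
    simpa using sum_le_card_nsmul (Icc 1 n) _ _ fun k _ => pow_le_pow_left₀ (norm_nonneg _) (hρ k) 2
  have hn0 : (0 : ℝ) < n := by exact_mod_cast hn
  calc infDist ((n : ℝ)⁻¹ • ∑ k ∈ Icc 1 n, r k) S
      ≤ ‖∑ k ∈ Icc 1 n, (rs k - r k)‖ / n := by
        simpa using hSconv.infDist_average_le (nonempty_Icc.2 hn) fun k _ => hmem k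
    _ ≤ Real.sqrt n * ρ / n := by gcongr
    _ = ρ / Real.sqrt n := by
        rw [div_eq_div_iff hn0.ne' (Real.sqrt_pos.2 hn0).ne']
        nlinarith [Real.mul_self_sqrt hn0.le]

theorem stmt2 {ℓ : ℕ} (ρ : ℝ) (S : Set (EuclideanSpace ℝ (Fin ℓ)))
    (hSclosed : IsClosed S) (hSconv : Convex ℝ S)
    (r rs : ℕ → EuclideanSpace ℝ (Fin ℓ))
    (hmem : ∀ k, rs k ∈ S)
    (hρ : ∀ k, ‖rs k - r k‖ ≤ ρ)
    (hsteer : ∀ n : ℕ, 2 ≤ n →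
      (inner ℝ (((n : ℝ) - 1)⁻¹ • ∑ k ∈ Finset.Icc 1 (n - 1), (rs k - r k))
        (rs n - r n) : ℝ) ≤ 0) :
    ∀ n : ℕ, 1 ≤ n →
      Metric.infDist ((n : ℝ)⁻¹ • ∑ k ∈ Finset.Icc 1 n, r k) S ≤ ρ / Real.sqrt n :=
  stmt2_general ρ S hSconv r rs hmem hρ hsteer
end
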